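/- arXiv:1310.5828 — 3 statements merged into one kernel-verified Lean document; each statement's English description precedes it below -/
import Mathlib

section
/- Consider a single robot with dynamics x' = v, v' = a, subject to 0 ≤ v ≤ v_max and a_min ≤ a ≤ a_max with a_min < 0 < a_max. From initial state (x₀, v₀) with 0 ≤ v₀ ≤ v_max, the set of reachable positions at time t > 0 is exactly the closed interval [x_min(t), x_max(t)], where x_min(t) is the position under maximal braking (accelerate a_min until v = 0, then stay) and x_max(t) under maximal acceleration (a_max until v = v_max, then cruise). -/
/-- Position at time `t` under maximal braking (deceleration `amin < 0`)
from position `x` with velocity `v ≥ 0`. -/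
noncomputable def brakePos (amin x v t : ℝ) : ℝ :=
  x + v * min t (-v / amin) + (amin / 2) * (min t (-v / amin)) ^ 2

/-- Velocity at time `t` under maximal braking. -/
def brakeVel (amin v t : ℝ) : ℝ :=
  max (v + amin * t) 0

/-- Position at time `t` under maximal acceleration (`amax > 0`, saturating at
`vmax`) from position `x` with velocity `v`. -/
noncomputable def accelPos (amax vmax x v t : ℝ) : ℝ :=
  x + v * min t ((vmax - v) / amax) + (amax / 2) * (min t ((vmax - v) / amax)) ^ 2
    + vmax * max 0 (t - (vmax - v) / amax)


/-!
Every admissible velocity `v` with `v 0 = v₀` is squeezed between the two extremal profiles,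
`brakeVel amin v₀ ≤ v ≤ accelVel amax vmax v₀`: the acceleration bounds integrate to
`v₀ + amin τ ≤ v τ ≤ v₀ + amax τ`, and `0 ≤ v ≤ vmax`. Integrating once more gives
`brakePos ≤ x ≤ accelPos` at time `t`. Conversely, all constraints are convex, so every convex
combination of the braking and the accelerating trajectory is admissible; their end positions
fill the whole interval.
-/

open Set Topology

def accelVel (amax vmax v t : ℝ) : ℝ :=
  min (v + amax * t) vmax

def IsAdmissibleVel (amin amax vmax t : ℝ) (v : ℝ → ℝ) : Prop :=
  (∀ τ ∈ Icc 0 t, 0 ≤ v τ ∧ v τ ≤ vmax) ∧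
    ∀ τ₁ ∈ Icc 0 t, ∀ τ₂ ∈ Icc 0 t, τ₁ ≤ τ₂ →
      amin * (τ₂ - τ₁) ≤ v τ₂ - v τ₁ ∧ v τ₂ - v τ₁ ≤ amax * (τ₂ - τ₁)

lemma sub_le_sub_of_hasDerivAt_le {f g f' g' : ℝ → ℝ} {a b : ℝ} (hab : a ≤ b)
    (hf : ∀ τ ∈ Icc a b, HasDerivAt f (f' τ) τ) (hg : ∀ τ ∈ Icc a b, HasDerivAt g (g' τ) τ)
    (hle : ∀ τ ∈ Ioo a b, f' τ ≤ g' τ) : f b - f a ≤ g b - g a := by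
  have hd : ∀ τ ∈ Icc a b, HasDerivAt (g - f) (g' τ - f' τ) τ :=
    fun τ hτ => (hg τ hτ).sub (hf τ hτ)
  have hmono : MonotoneOn (g - f) (Icc a b) :=
    monotoneOn_of_hasDerivWithinAt_nonneg (convex_Icc a b)
      (fun τ hτ => (hd τ hτ).continuousAt.continuousWithinAt)
      (fun τ hτ => (hd τ (interior_subset hτ)).hasDerivWithinAt)
      (fun τ hτ => sub_nonneg.2 (hle τ (by rwa [interior_Icc] at hτ)))
  have := hmono (left_mem_Icc.2 hab) (right_mem_Icc.2 hab) hab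
  simp only [Pi.sub_apply] at this
  linarith

lemma hasDerivAt_min_zero_sq (τ : ℝ) :
    HasDerivAt (fun s : ℝ => min s 0 ^ 2) (2 * min τ 0) τ := by
  refine hasDerivAt_of_hasDerivAt_of_ne' (f := fun s : ℝ => min s 0 ^ 2)
    (g := fun s => 2 * min s 0) (x := 0) (fun y hy => ?_) (by fun_prop) (by fun_prop) τ
  rcases hy.lt_or_gt with hy | hy
  · have h : (fun s : ℝ => s ^ 2) =ᶠ[𝓝 y] fun s => min s 0 ^ 2 := by
      filter_upwards [eventually_lt_nhds hy] with s hs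
      rw [min_eq_left hs.le]
    rw [min_eq_left hy.le]
    simpa using (hasDerivAt_pow 2 y).congr_of_eventuallyEq h.symm
  · have h : (fun _ : ℝ => (0 : ℝ)) =ᶠ[𝓝 y] fun s => min s 0 ^ 2 := by
      filter_upwards [eventually_gt_nhds hy] with s hs
      simp [min_eq_right hs.le]
    rw [min_eq_right hy.le, mul_zero]
    exact (hasDerivAt_const y 0).congr_of_eventuallyEq h.symm

lemma hasDerivAt_min_sub_sq (T τ : ℝ) :
    HasDerivAt (fun s => min (s - T) 0 ^ 2) (2 * min (τ - T) 0) τ := by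
  exact ((hasDerivAt_min_zero_sq (τ - T)).comp τ ((hasDerivAt_id τ).sub_const T)).congr_deriv
    (mul_one _)

-- With `T` the switching time, the extremal positions are affine plus `a / 2 * min (s - T) 0 ^ 2`.
lemma brakePos_eq {amin : ℝ} (hamin : amin ≠ 0) (x v : ℝ) :
    brakePos amin x v = fun s =>
      (x - amin / 2 * (-v / amin) ^ 2) + amin / 2 * min (s - -v / amin) 0 ^ 2 := by
  funext s
  have hmin : min (s - -v / amin) 0 = min s (-v / amin) - -v / amin := by
    rw [← min_sub_sub_right, sub_self]
  rw [brakePos, hmin]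
  field_simp
  ring

lemma brakeVel_eq {amin : ℝ} (hamin : amin < 0) (v τ : ℝ) :
    brakeVel amin v τ = amin * min (τ - -v / amin) 0 := by
  have hanti : Antitone (amin * ·) := fun _ _ h => mul_le_mul_of_nonpos_left h hamin.le
  have htb : amin * (-v / amin) = -v := mul_div_cancel₀ _ hamin.ne
  rw [brakeVel, hanti.map_min, mul_zero, mul_sub, htb, sub_neg_eq_add, add_comm]

lemma hasDerivAt_brakePos {amin : ℝ} (hamin : amin < 0) (x v τ : ℝ) :
    HasDerivAt (brakePos amin x v) (brakeVel amin v τ) τ := by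
  rw [brakePos_eq hamin.ne, brakeVel_eq hamin]
  exact (((hasDerivAt_min_sub_sq _ τ).const_mul (amin / 2)).const_add _).congr_deriv (by ring)

lemma accelPos_eq {amax : ℝ} (hamax : amax ≠ 0) (vmax x v : ℝ) :
    accelPos amax vmax x v = fun s =>
      (x - amax / 2 * ((vmax - v) / amax) ^ 2) + vmax * s
        + amax / 2 * min (s - (vmax - v) / amax) 0 ^ 2 := by
  funext s
  have hmin : min (s - (vmax - v) / amax) 0 = min s ((vmax - v) / amax) - (vmax - v) / amax := by
    rw [← min_sub_sub_right, sub_self]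
  have hmax : max 0 (s - (vmax - v) / amax) = s - min s ((vmax - v) / amax) := by
    rw [← max_sub_sub_left, sub_self]
  rw [accelPos, hmin, hmax]
  field_simp
  ring

lemma accelVel_eq {amax : ℝ} (hamax : 0 < amax) (vmax v τ : ℝ) :
    accelVel amax vmax v τ = vmax + amax * min (τ - (vmax - v) / amax) 0 := by
  have hmono : Monotone (amax * ·) := fun _ _ h => mul_le_mul_of_nonneg_left h hamax.le
  have hta : amax * ((vmax - v) / amax) = vmax - v := mul_div_cancel₀ _ hamax.ne'
  rw [accelVel, hmono.map_min, mul_zero, ← min_add_add_left, add_zero, mul_sub, hta]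
  ring_nf

lemma hasDerivAt_accelPos {amax : ℝ} (hamax : 0 < amax) (vmax x v τ : ℝ) :
    HasDerivAt (accelPos amax vmax x v) (accelVel amax vmax v τ) τ := by
  rw [accelPos_eq hamax.ne', accelVel_eq hamax]
  exact ((((hasDerivAt_id τ).const_mul vmax).const_add _).add
    ((hasDerivAt_min_sub_sq _ τ).const_mul (amax / 2))).congr_deriv (by simp only [mul_one]; ring)

lemma brakePos_zero {amin : ℝ} (hamin : amin ≤ 0) (x : ℝ) {v : ℝ} (hv : 0 ≤ v) :
    brakePos amin x v 0 = x := by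
  rw [brakePos, min_eq_left (div_nonneg_of_nonpos (neg_nonpos.2 hv) hamin)]
  ring

lemma accelPos_zero {amax : ℝ} (hamax : 0 ≤ amax) (x : ℝ) {v vmax : ℝ} (hv : v ≤ vmax) :
    accelPos amax vmax x v 0 = x := by
  have hta : 0 ≤ (vmax - v) / amax := div_nonneg (sub_nonneg.2 hv) hamax
  rw [accelPos, min_eq_left hta, max_eq_left (by linarith)]
  ring

lemma brakeVel_zero (amin : ℝ) {v : ℝ} (hv : 0 ≤ v) : brakeVel amin v 0 = v := by
  simp [brakeVel, hv]

lemma accelVel_zero (amax : ℝ) {v vmax : ℝ} (hv : v ≤ vmax) : accelVel amax vmax v 0 = v := by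
  simp [accelVel, hv]

lemma convex_setOf_isAdmissibleVel (amin amax vmax t : ℝ) :
    Convex ℝ {v : ℝ → ℝ | IsAdmissibleVel amin amax vmax t v} := by
  rintro v ⟨hv, hv'⟩ w ⟨hw, hw'⟩ a b ha hb hab
  obtain rfl : b = 1 - a := by linarith
  refine ⟨fun τ hτ => ?_, fun τ₁ h₁ τ₂ h₂ h => ?_⟩
  all_goals simp only [Pi.add_apply, Pi.smul_apply, smul_eq_mul]
  · obtain ⟨hv0, hv1⟩ := hv τ hτ
    obtain ⟨hw0, hw1⟩ := hw τ hτ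
    constructor <;> nlinarith
  · obtain ⟨hv0, hv1⟩ := hv' τ₁ h₁ τ₂ h₂ h
    obtain ⟨hw0, hw1⟩ := hw' τ₁ h₁ τ₂ h₂ h
    constructor
    · nlinarith [mul_le_mul_of_nonneg_left hv0 ha, mul_le_mul_of_nonneg_left hw0 hb]
    · nlinarith [mul_le_mul_of_nonneg_left hv1 ha, mul_le_mul_of_nonneg_left hw1 hb]

lemma isAdmissibleVel_brakeVel {amin amax vmax v₀ : ℝ} (hamin : amin ≤ 0) (hamax : 0 ≤ amax)
    (hvmax : 0 ≤ vmax) (hv₀ : v₀ ≤ vmax) (t : ℝ) :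
    IsAdmissibleVel amin amax vmax t (brakeVel amin v₀) := by
  refine ⟨fun τ hτ => ⟨le_max_right _ _, max_le (by nlinarith [hτ.1]) hvmax⟩,
    fun τ₁ _ τ₂ _ h => ?_⟩
  have hΔ : amin * (τ₂ - τ₁) ≤ 0 := mul_nonpos_of_nonpos_of_nonneg hamin (sub_nonneg.2 h)
  have hΔ' : 0 ≤ amax * (τ₂ - τ₁) := mul_nonneg hamax (sub_nonneg.2 h)
  simp only [brakeVel]
  constructor <;> rcases le_total (v₀ + amin * τ₁) 0 with h₁ | h₁ <;>
    rcases le_total (v₀ + amin * τ₂) 0 with h₂ | h₂ <;>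
    simp only [max_eq_left, max_eq_right, h₁, h₂] <;> nlinarith

lemma isAdmissibleVel_accelVel {amin amax vmax v₀ : ℝ} (hamin : amin ≤ 0) (hamax : 0 ≤ amax)
    (hvmax : 0 ≤ vmax) (hv₀ : 0 ≤ v₀) (t : ℝ) :
    IsAdmissibleVel amin amax vmax t (accelVel amax vmax v₀) := by
  refine ⟨fun τ hτ => ⟨le_min (by nlinarith [hτ.1]) hvmax, min_le_right _ _⟩,
    fun τ₁ _ τ₂ _ h => ?_⟩
  have hΔ : amin * (τ₂ - τ₁) ≤ 0 := mul_nonpos_of_nonpos_of_nonneg hamin (sub_nonneg.2 h)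
  have hΔ' : 0 ≤ amax * (τ₂ - τ₁) := mul_nonneg hamax (sub_nonneg.2 h)
  simp only [accelVel]
  constructor <;> rcases le_total (v₀ + amax * τ₁) vmax with h₁ | h₁ <;>
    rcases le_total (v₀ + amax * τ₂) vmax with h₂ | h₂ <;>
    simp only [min_eq_left, min_eq_right, h₁, h₂] <;> nlinarith

lemma brakeVel_le {amin amax vmax t : ℝ} {v : ℝ → ℝ} (hv : IsAdmissibleVel amin amax vmax t v)
    {τ : ℝ} (hτ : τ ∈ Icc 0 t) : brakeVel amin (v 0) τ ≤ v τ := by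
  have h₀ : (0 : ℝ) ∈ Icc 0 t := ⟨le_rfl, hτ.1.trans hτ.2⟩
  have := (hv.2 0 h₀ τ hτ hτ.1).1
  exact max_le (by linarith) (hv.1 τ hτ).1

lemma le_accelVel {amin amax vmax t : ℝ} {v : ℝ → ℝ} (hv : IsAdmissibleVel amin amax vmax t v)
    {τ : ℝ} (hτ : τ ∈ Icc 0 t) : v τ ≤ accelVel amax vmax (v 0) τ := by
  have h₀ : (0 : ℝ) ∈ Icc 0 t := ⟨le_rfl, hτ.1.trans hτ.2⟩
  have := (hv.2 0 h₀ τ hτ hτ.1).2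
  exact le_min (by linarith) (hv.1 τ hτ).2

lemma brakePos_le {amin amax vmax t : ℝ} (hamin : amin < 0) (ht : 0 ≤ t) {x v : ℝ → ℝ}
    (hv : IsAdmissibleVel amin amax vmax t v) (hx : ∀ τ ∈ Icc 0 t, HasDerivAt x (v τ) τ) :
    brakePos amin (x 0) (v 0) t ≤ x t := by
  have := sub_le_sub_of_hasDerivAt_le ht (fun τ _ => hasDerivAt_brakePos hamin (x 0) (v 0) τ) hx
    fun τ hτ => brakeVel_le hv (Ioo_subset_Icc_self hτ)
  rw [brakePos_zero hamin.le _ (hv.1 0 ⟨le_rfl, ht⟩).1] at this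
  linarith

lemma le_accelPos {amin amax vmax t : ℝ} (hamax : 0 < amax) (ht : 0 ≤ t) {x v : ℝ → ℝ}
    (hv : IsAdmissibleVel amin amax vmax t v) (hx : ∀ τ ∈ Icc 0 t, HasDerivAt x (v τ) τ) :
    x t ≤ accelPos amax vmax (x 0) (v 0) t := by
  have := sub_le_sub_of_hasDerivAt_le ht hx
    (fun τ _ => hasDerivAt_accelPos hamax vmax (x 0) (v 0) τ)
    fun τ hτ => le_accelVel hv (Ioo_subset_Icc_self hτ)
  rw [accelPos_zero hamax.le _ (hv.1 0 ⟨le_rfl, ht⟩).2] at this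
  linarith

theorem stmt_6_general (vmax amin amax x₀ v₀ t : ℝ)
    (hamin : amin < 0) (hamax : 0 < amax)
    (hv₀ : 0 ≤ v₀) (hv₀' : v₀ ≤ vmax) (ht : 0 < t) :
    {p : ℝ | ∃ x v : ℝ → ℝ,
      x 0 = x₀ ∧ v 0 = v₀ ∧
      (∀ τ ∈ Set.Icc 0 t, HasDerivAt x (v τ) τ) ∧
      (∀ τ ∈ Set.Icc 0 t, 0 ≤ v τ ∧ v τ ≤ vmax) ∧
      (∀ τ₁ ∈ Set.Icc 0 t, ∀ τ₂ ∈ Set.Icc 0 t, τ₁ ≤ τ₂ →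
        amin * (τ₂ - τ₁) ≤ v τ₂ - v τ₁ ∧ v τ₂ - v τ₁ ≤ amax * (τ₂ - τ₁)) ∧
      p = x t}
    = Set.Icc (brakePos amin x₀ v₀ t) (accelPos amax vmax x₀ v₀ t) := by
  ext p
  constructor
  · rintro ⟨x, v, rfl, rfl, hx, hbounds, hincr, rfl⟩
    exact ⟨brakePos_le hamin ht.le ⟨hbounds, hincr⟩ hx, le_accelPos hamax ht.le ⟨hbounds, hincr⟩ hx⟩
  · intro hp
    obtain ⟨a, b, ha, hb, hab, rfl⟩ :
        p ∈ segment ℝ (brakePos amin x₀ v₀ t) (accelPos amax vmax x₀ v₀ t) := by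
      rwa [segment_eq_Icc (hp.1.trans hp.2)]
    have hvmax : 0 ≤ vmax := hv₀.trans hv₀'
    obtain ⟨hbounds, hincr⟩ := convex_setOf_isAdmissibleVel amin amax vmax t
      (isAdmissibleVel_brakeVel hamin.le hamax.le hvmax hv₀' t)
      (isAdmissibleVel_accelVel hamin.le hamax.le hvmax hv₀ t) ha hb hab
    refine ⟨a • brakePos amin x₀ v₀ + b • accelPos amax vmax x₀ v₀,
      a • brakeVel amin v₀ + b • accelVel amax vmax v₀, ?_, ?_, fun τ _ => ?_, hbounds, hincr, rfl⟩
    · simp only [Pi.add_apply, Pi.smul_apply, brakePos_zero hamin.le x₀ hv₀,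
        accelPos_zero hamax.le x₀ hv₀', Convex.combo_self hab]
    · simp only [Pi.add_apply, Pi.smul_apply, brakeVel_zero amin hv₀, accelVel_zero amax hv₀',
        Convex.combo_self hab]
    · exact ((hasDerivAt_brakePos hamin x₀ v₀ τ).const_smul a).add
        ((hasDerivAt_accelPos hamax vmax x₀ v₀ τ).const_smul b)

theorem stmt_6 (vmax amin amax x₀ v₀ t : ℝ)
    (hamin : amin < 0) (hamax : 0 < amax) (hvmax : 0 < vmax)
    (hv₀ : 0 ≤ v₀) (hv₀' : v₀ ≤ vmax) (ht : 0 < t) :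
    {p : ℝ | ∃ x v : ℝ → ℝ,
      x 0 = x₀ ∧ v 0 = v₀ ∧
      (∀ τ ∈ Set.Icc 0 t, HasDerivAt x (v τ) τ) ∧
      (∀ τ ∈ Set.Icc 0 t, 0 ≤ v τ ∧ v τ ≤ vmax) ∧
      (∀ τ₁ ∈ Set.Icc 0 t, ∀ τ₂ ∈ Set.Icc 0 t, τ₁ ≤ τ₂ →
        amin * (τ₂ - τ₁) ≤ v τ₂ - v τ₁ ∧ v τ₂ - v τ₁ ≤ amax * (τ₂ - τ₁)) ∧
      p = x t}
    = Set.Icc (brakePos amin x₀ v₀ t) (accelPos amax vmax x₀ v₀ t) :=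
  stmt_6_general vmax amin amax x₀ v₀ t hamin hamax hv₀ hv₀' ht
end

section
/- If the per-pair obstacle χ_obs_{ij} is an open bounded set and the free space for a priority graph G is defined as the complement of the union of χ_obs_{i≻j} over edges (i,j) of G, then the goal region sup χ_obs + ℝ₊^n is contained in the free space χ_free_G, for any priority graph G. -/
/-- The priority obstacle `A - ℝ₊·e_i + ℝ₊·e_j`. -/
def prioObs {n : ℕ} (A : Set (Fin n → ℝ)) (i j : Fin n) : Set (Fin n → ℝ) :=
  {y | ∃ a ∈ A, ∃ s : ℝ, 0 ≤ s ∧ ∃ t : ℝ, 0 ≤ t ∧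
    y = a - s • (Pi.single i 1 : Fin n → ℝ) + t • (Pi.single j 1 : Fin n → ℝ)}

theorem stmt_15 {n : ℕ} (A : Fin n → Fin n → Set (Fin n → ℝ))
    (hsym : ∀ i j, A i j = A j i)
    (hopen : ∀ i j, i ≠ j → IsOpen (A i j))
    (hbd : ∀ i j, i ≠ j → Bornology.IsBounded (A i j))
    (hcyl : ∀ i j, i ≠ j → ∀ x y : Fin n → ℝ,
      x i = y i → x j = y j → (x ∈ A i j ↔ y ∈ A i j))
    (χObs : Set (Fin n → ℝ)) (hχ : χObs = ⋃ i, ⋃ j, ⋃ (_ : i ≠ j), A i j)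
    (hne : χObs.Nonempty)
    (E : Set (Fin n × Fin n)) (hE : ∀ e ∈ E, e.1 ≠ e.2)
    (freeG : Set (Fin n → ℝ))
    (hfree : freeG = (⋃ e ∈ E, prioObs (A e.1 e.2) e.1 e.2)ᶜ) :
    {y : Fin n → ℝ | ∀ k, sSup ((fun x : Fin n → ℝ => x k) '' χObs) ≤ y k}
      ⊆ freeG := by
  -- χObs is bounded
  have hχbd : Bornology.IsBounded χObs := by
    rw [hχ]
    apply Bornology.isBounded_iUnion.mpr
    intro i
    apply Bornology.isBounded_iUnion.mpr
    intro j
    by_cases h : i ≠ j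
    · simpa [h] using hbd i j h
    · push_neg at h; subst h; simp
  obtain ⟨C, hC⟩ := hχbd.exists_norm_le
  have hbdd : ∀ k : Fin n, BddAbove ((fun x : Fin n → ℝ => x k) '' χObs) := by
    intro k
    refine ⟨C, ?_⟩
    rintro _ ⟨x, hx, rfl⟩
    calc x k ≤ |x k| := le_abs_self _
    _ ≤ ‖x‖ := by simpa using norm_le_pi_norm x k
    _ ≤ C := hC x hx
  intro y hy
  rw [hfree]
  intro hmem
  simp only [Set.mem_iUnion] at hmem
  obtain ⟨⟨i, j⟩, heE, a, ha, s, hs, t, ht, heq⟩ := hmem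
  have hij : i ≠ j := hE _ heE
  -- y i = a i - s
  have hyi : y i = a i - s := by
    have := congrFun heq i
    simpa [Pi.single_apply, hij.symm] using this
  -- find a point of A i j with bigger i-th coordinate
  obtain ⟨ε, hε, hball⟩ := Metric.isOpen_iff.mp (hopen i j hij) a ha
  set a' : Fin n → ℝ := a + (ε / 2) • (Pi.single i 1 : Fin n → ℝ) with ha'def
  have ha' : a' ∈ A i j := by
    apply hball
    rw [Metric.mem_ball, dist_eq_norm]
    have : a' - a = (ε / 2) • (Pi.single i 1 : Fin n → ℝ) := by
      rw [ha'def]; abel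
    rw [this, norm_smul]
    have h1 : ‖(Pi.single i 1 : Fin n → ℝ)‖ ≤ 1 := by
      apply pi_norm_le_iff_of_nonneg zero_le_one |>.mpr
      intro k
      rcases eq_or_ne k i with rfl | hk
      · simp
      · simp [Pi.single_apply, hk]
    calc ‖(ε/2)‖ * ‖(Pi.single i 1 : Fin n → ℝ)‖ ≤ ‖(ε/2)‖ * 1 := by
          exact mul_le_mul_of_nonneg_left h1 (norm_nonneg _)
      _ = ε / 2 := by rw [mul_one]; exact abs_of_pos (by linarith)
      _ < ε := by linarith
  have ha'χ : a' ∈ χObs := by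
    rw [hχ]; simp only [Set.mem_iUnion]; exact ⟨i, j, hij, ha'⟩
  have hle : a' i ≤ sSup ((fun x : Fin n → ℝ => x i) '' χObs) :=
    le_csSup (hbdd i) ⟨a', ha'χ, rfl⟩
  have ha'i : a' i = a i + ε / 2 := by simp [ha'def]
  have := hy i
  -- y i ≥ sSup ≥ a' i = a i + ε/2 > a i ≥ a i - s = y i
  linarith [hyi, hle, ha'i, hs]
end

section
/- Deadlock-freeness implies finite completion time: suppose x : ℝ₊ → ℝ^n is componentwise nondecreasing and there exist μ > 0 and ΔT > 0 such that for every t with x(t) ∉ G := M + ℝ₊^n (componentwise), some coordinate i with x_i(t) < M_i satisfies x_i(t+ΔT) ≥ x_i(t) + μ. Then there exists T ≤ ΔT · (1 + Σ_i ⌈(M_i − x_i(0))₊/μ⌉) with x(T) ∈ G. -/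
private lemma ceil_drop {μ a b m : ℝ} (hμ : 0 < μ) (hab : a + μ ≤ b) (ham : a < m) :
    ⌈max (m - b) 0 / μ⌉₊ < ⌈max (m - a) 0 / μ⌉₊ := by
  have hc : 0 < (m - a) / μ := div_pos (by linarith) hμ
  have hmax : max (m - a) 0 = m - a := max_eq_left (by linarith)
  set N := ⌈max (m - a) 0 / μ⌉₊ with hN
  have hN1 : 1 ≤ N := by
    rw [hN, hmax]
    exact Nat.one_le_ceil_iff.mpr hc
  have hNle : (m - a) / μ ≤ (N : ℝ) := by rw [hN, hmax] at *; exact Nat.le_ceil _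
  have hma : m - a ≤ N * μ := by
    rw [div_le_iff₀ hμ] at hNle; linarith
  have : ⌈max (m - b) 0 / μ⌉₊ ≤ N - 1 := by
    rw [Nat.ceil_le]
    have hcast : ((N - 1 : ℕ) : ℝ) = (N : ℝ) - 1 := by push_cast [hN1]; ring
    rw [hcast, div_le_iff₀ hμ]
    apply max_le
    · nlinarith
    · have : (1 : ℝ) ≤ (N : ℝ) := by exact_mod_cast hN1
      nlinarith
  omega

theorem stmt_17 {n : ℕ} (x : ℝ → Fin n → ℝ) (M : Fin n → ℝ) (μ ΔT : ℝ)
    (hμ : 0 < μ) (hΔT : 0 < ΔT)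
    (hmono : ∀ i : Fin n, Monotone (fun t => x t i))
    (hprog : ∀ t : ℝ, 0 ≤ t → (¬ ∀ i, M i ≤ x t i) →
      ∃ i, x t i < M i ∧ x t i + μ ≤ x (t + ΔT) i) :
    ∃ T : ℝ, 0 ≤ T ∧
      T ≤ ΔT * (1 + (∑ i, ⌈max (M i - x 0 i) 0 / μ⌉₊ : ℕ)) ∧
      ∀ i, M i ≤ x T i := by
  set N : ℕ := ∑ i, ⌈max (M i - x 0 i) 0 / μ⌉₊ with hNdef
  set Φ : ℕ → ℕ := fun k => ∑ i, ⌈max (M i - x (k * ΔT) i) 0 / μ⌉₊ with hΦ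
  have hΦ0 : Φ 0 = N := by simp [hΦ, hNdef]
  have key : ∀ k : ℕ, (∀ j : ℕ, j < k → ¬ ∀ i, M i ≤ x (j * ΔT) i) → Φ k + k ≤ Φ 0 := by
    intro k
    induction k with
    | zero => intro _; simp
    | succ k ih =>
      intro h
      have ihk := ih (fun j hj => h j (Nat.lt_succ_of_lt hj))
      have hk : ¬ ∀ i, M i ≤ x (k * ΔT) i := h k (Nat.lt_succ_self k)
      have hkpos : (0 : ℝ) ≤ k * ΔT := by positivity
      obtain ⟨i, hi1, hi2⟩ := hprog (k * ΔT) hkpos hk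
      have ht : ((k + 1 : ℕ) : ℝ) * ΔT = (k : ℝ) * ΔT + ΔT := by push_cast; ring
      have hle : ∀ j ∈ Finset.univ, ⌈max (M j - x ((k + 1 : ℕ) * ΔT) j) 0 / μ⌉₊ ≤
          ⌈max (M j - x ((k : ℕ) * ΔT) j) 0 / μ⌉₊ := by
        intro j _
        apply Nat.ceil_le_ceil
        gcongr
        exact hmono j (by rw [ht]; linarith)
      have hlt : ⌈max (M i - x ((k + 1 : ℕ) * ΔT) i) 0 / μ⌉₊ <
          ⌈max (M i - x ((k : ℕ) * ΔT) i) 0 / μ⌉₊ := by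
        rw [ht]
        exact ceil_drop hμ hi2 hi1
      have hstep : Φ (k + 1) < Φ k :=
        Finset.sum_lt_sum hle ⟨i, Finset.mem_univ i, hlt⟩
      omega
  have hex : ∃ j : ℕ, j ≤ N ∧ ∀ i, M i ≤ x (j * ΔT) i := by
    by_contra hcon
    push_neg at hcon
    have h1 : ∀ j : ℕ, j < N + 1 → ¬ ∀ i, M i ≤ x (j * ΔT) i := by
      intro j hj hG
      obtain ⟨i, hi⟩ := hcon j (by omega)
      exact absurd (hG i) (not_le.mpr hi)
    have := key (N + 1) h1
    omega
  obtain ⟨j, hjN, hjG⟩ := hex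
  refine ⟨j * ΔT, by positivity, ?_, hjG⟩
  have hjr : (j : ℝ) ≤ 1 + N := by
    have : (j : ℝ) ≤ N := by exact_mod_cast hjN
    linarith
  calc (j : ℝ) * ΔT ≤ (1 + N) * ΔT := by nlinarith
    _ = ΔT * (1 + N) := by ring
end
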